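/- arXiv:1304.0868 — 2 statements merged into one kernel-verified Lean document; each statement's English description precedes it below -/
import Mathlib

section
/- Let E be a finite-dimensional real inner product space, let A : E → ℝ be a convex and superlinear function, let x ∈ E, let y ∈ E be a subgradient of A at x, and set S := { z ∈ E : y is a subgradient of A at z }. If x lies in the relative interior of S, then S is a flat of A containing x in its relative interior, and every flat F of A containing x in its relative interior satisfies F ⊆ S; i.e., S is the largest flat of A containing x in its relative interior. -/
/-!
Subtracting the linear function `⟪y, ·⟫` turns `S` into the set of minimisers of the convex
function `g := A - ⟪y, ·⟫`, i.e. the sublevel set `{g ≤ g x}`; it is therefore convex, and `A`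
agrees with `⟪y, ·⟫ + g x` on it. If `F` is a flat with `x` in its relative interior, then `g` is
affine on `F` and attains its minimum over `F` at the relative interior point `x`; an affine
function can only do that if it is constant, so `g = g x` on `F`, i.e. `F ⊆ S`.
-/

open RealInnerProductSpace Filter Topology

section IntrinsicInterior

variable {E : Type*} [AddCommGroup E] [Module ℝ E] [TopologicalSpace E]
  [IsTopologicalAddGroup E] [ContinuousSMul ℝ E]

theorem eventually_add_smul_mem_of_mem_intrinsicInterior {s : Set E} {x v : E}
    (hx : x ∈ intrinsicInterior ℝ s) (hv : v ∈ (affineSpan ℝ s).direction) :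
    ∀ᶠ t in 𝓝 (0 : ℝ), x + t • v ∈ s := by
  obtain ⟨X, hX, rfl⟩ := mem_intrinsicInterior.mp hx
  have hline : ∀ t : ℝ, X.1 + t • v ∈ affineSpan ℝ s := fun t => by
    simpa [vadd_eq_add, add_comm] using
      AffineSubspace.vadd_mem_of_mem_direction (Submodule.smul_mem _ t hv) X.2
  let line : ℝ → affineSpan ℝ s := fun t => ⟨X.1 + t • v, hline t⟩
  have hline_cont : Continuous line := by fun_prop
  have hline_zero : line 0 = X := Subtype.ext (by simp [line])
  have hnhds : line ⁻¹' interior ((↑) ⁻¹' s) ∈ 𝓝 (0 : ℝ) :=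
    hline_cont.continuousAt.preimage_mem_nhds (isOpen_interior.mem_nhds (hline_zero ▸ hX))
  filter_upwards [hnhds] with t ht using (interior_subset ht : line t ∈ (↑) ⁻¹' s)

theorem exists_pos_add_smul_sub_mem_of_mem_intrinsicInterior {s : Set E} {x z : E}
    (hx : x ∈ intrinsicInterior ℝ s) (hz : z ∈ s) :
    ∃ t : ℝ, 0 < t ∧ x + t • (x - z) ∈ s := by
  have hv : x - z ∈ (affineSpan ℝ s).direction :=
    AffineSubspace.vsub_mem_direction
      (subset_affineSpan ℝ s (intrinsicInterior_subset hx)) (subset_affineSpan ℝ s hz)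
  obtain ⟨t, hst, ht⟩ := ((eventually_add_smul_mem_of_mem_intrinsicInterior hx hv).filter_mono
    nhdsWithin_le_nhds).and (self_mem_nhdsWithin (s := Set.Ioi 0)) |>.exists
  exact ⟨t, ht, hst⟩

theorem IsMinOn.eq_of_mem_intrinsicInterior {F : Set E} {f : E → ℝ} {ℓ : E →ₗ[ℝ] ℝ} {b : ℝ}
    {x : E} (hf : ∀ z ∈ F, f z = ℓ z + b) (hmin : IsMinOn f F x)
    (hx : x ∈ intrinsicInterior ℝ F) {z : E} (hz : z ∈ F) : f z = f x := by
  obtain ⟨t, ht, hxt⟩ := exists_pos_add_smul_sub_mem_of_mem_intrinsicInterior hx hz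
  have hx' : x ∈ F := intrinsicInterior_subset hx
  have hf_xt : f (x + t • (x - z)) = f x + t * (f x - f z) := by
    rw [hf _ hxt, hf _ hx', hf _ hz, map_add, map_smul, map_sub, smul_eq_mul]
    ring
  have : f x ≤ f x + t * (f x - f z) := hf_xt ▸ hmin hxt
  exact le_antisymm (by nlinarith) (hmin hz)

end IntrinsicInterior

theorem hasSubgradient_iff_isMinOn {E : Type*} [NormedAddCommGroup E] [InnerProductSpace ℝ E]
    (A : E → ℝ) (y z : E) :
    (∀ w, A z + ⟪y, w - z⟫ ≤ A w) ↔ IsMinOn (fun w => A w - ⟪y, w⟫) Set.univ z := by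
  simp only [isMinOn_univ_iff, inner_sub_right]
  exact forall_congr' fun w => by constructor <;> intro h <;> linarith

theorem subgradient_locus_is_largest_flat_general
    {E : Type*} [NormedAddCommGroup E] [InnerProductSpace ℝ E]
    (A : E → ℝ)
    (hA_conv : ConvexOn ℝ Set.univ A)
    (x y : E)
    (hy : ∀ z : E, A x + ⟪y, z - x⟫ ≤ A z)
    (S : Set E)
    (hS : S = {z : E | ∀ w : E, A z + ⟪y, w - z⟫ ≤ A w})
    (hxS : x ∈ intrinsicInterior ℝ S) :
    (Convex ℝ S ∧ ∃ (ℓ : E →L[ℝ] ℝ) (b : ℝ), ∀ z ∈ S, A z = ℓ z + b) ∧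
    x ∈ intrinsicInterior ℝ S ∧
    (∀ F : Set E,
      (Convex ℝ F ∧ ∃ (ℓ : E →L[ℝ] ℝ) (b : ℝ), ∀ z ∈ F, A z = ℓ z + b) →
      x ∈ intrinsicInterior ℝ F → F ⊆ S) := by
  set g : E → ℝ := fun w => A w - ⟪y, w⟫
  have hx_min : IsMinOn g Set.univ x := (hasSubgradient_iff_isMinOn A y x).mp hy
  have hS_sublevel : S = {z | g z ≤ g x} := by
    ext z
    simp only [hS, Set.mem_ofPred_eq, hasSubgradient_iff_isMinOn, isMinOn_univ_iff]
    exact ⟨fun h => h x, fun h w => h.trans (isMinOn_univ_iff.mp hx_min w)⟩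
  have hg_conv : ConvexOn ℝ Set.univ g :=
    hA_conv.sub ((innerSL ℝ y : E →ₗ[ℝ] ℝ).concaveOn convex_univ)
  refine ⟨⟨?_, innerSL ℝ y, g x, fun z hz => ?_⟩, hxS, ?_⟩
  · simpa [hS_sublevel] using hg_conv.convex_le (g x)
  · have : g z = g x := le_antisymm (by rwa [hS_sublevel] at hz) (isMinOn_univ_iff.mp hx_min z)
    simp only [g, innerSL_apply_apply] at this ⊢
    linarith
  · rintro F ⟨-, ℓ, b, hℓ⟩ hxF z hz
    have hg_affine : ∀ w ∈ F, g w = (ℓ - innerSL ℝ y : E →L[ℝ] ℝ) w + b := fun w hw => by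
      simp only [g, hℓ w hw, sub_apply, innerSL_apply_apply]
      ring
    rw [hS_sublevel]
    exact (IsMinOn.eq_of_mem_intrinsicInterior hg_affine (hx_min.on_subset (Set.subset_univ F))
      hxF hz).le

/-- If `x` lies in the relative interior of the set `S` of points where
`y` is a subgradient of a convex superlinear function `A`, then `S` is the largest
flat of `A` containing `x` in its relative interior. -/
theorem subgradient_locus_is_largest_flat
    {E : Type*} [NormedAddCommGroup E] [InnerProductSpace ℝ E] [FiniteDimensional ℝ E]
    (A : E → ℝ)
    (hA_conv : ConvexOn ℝ Set.univ A)
    (hA_sl : ∀ K : ℝ, 0 ≤ K → ∃ C : ℝ, ∀ x : E, K * ‖x‖ - C ≤ A x)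
    (x y : E)
    (hy : ∀ z : E, A x + ⟪y, z - x⟫ ≤ A z)
    (S : Set E)
    (hS : S = {z : E | ∀ w : E, A z + ⟪y, w - z⟫ ≤ A w})
    (hxS : x ∈ intrinsicInterior ℝ S) :
    (Convex ℝ S ∧ ∃ (ℓ : E →L[ℝ] ℝ) (b : ℝ), ∀ z ∈ S, A z = ℓ z + b) ∧
    x ∈ intrinsicInterior ℝ S ∧
    (∀ F : Set E,
      (Convex ℝ F ∧ ∃ (ℓ : E →L[ℝ] ℝ) (b : ℝ), ∀ z ∈ F, A z = ℓ z + b) →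
      x ∈ intrinsicInterior ℝ F → F ⊆ S) :=
  subgradient_locus_is_largest_flat_general A hA_conv x y hy S hS hxS
end

section
/- Let E be a finite-dimensional real inner product space, let A : E → ℝ be a convex and superlinear function, and let U ⊆ E be an open set. Define V := { y ∈ E : there exists x ∈ U such that y is a subgradient of A at x }. If for every y ∈ V the set { x ∈ E : y is a subgradient of A at x } consists of exactly one point, then V is an open subset of E. -/
/-!
Every `y` is a subgradient of `A` at some point, since `z ↦ A z - ⟪y, z⟫` is continuous and tends
to `+∞`. Together with uniqueness, this makes `Vᶜ` the set of `y` that are subgradients at some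
point outside `U`, i.e. the projection of the closed set `{(x, y) | x ∉ U, y ∈ ∂A(x)}`.
Superlinearity bounds the points at which a bounded set of `y` are subgradients, so by
Bolzano–Weierstrass this projection is closed.
-/

open RealInnerProductSpace Filter Topology Metric

theorem IsClosed.isClosed_image_snd_of_isBounded {X Y : Type*} [PseudoMetricSpace X]
    [ProperSpace X] [PseudoMetricSpace Y] {S : Set (X × Y)} (hS : IsClosed S)
    (hbdd : ∀ K : Set Y, Bornology.IsBounded K →
      Bornology.IsBounded (Prod.fst '' (S ∩ Prod.snd ⁻¹' K))) :
    IsClosed (Prod.snd '' S) := by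
  refine isClosed_of_closure_subset fun y hy => ?_
  obtain ⟨ys, hysS, hys⟩ := mem_closure_iff_seq_limit.1 hy
  choose ps hpsS hps using hysS
  have hfst : Bornology.IsBounded (Prod.fst '' (S ∩ Prod.snd ⁻¹' Set.range ys)) :=
    hbdd _ (isBounded_range_of_tendsto ys hys)
  obtain ⟨x, -, φ, hφ, hx⟩ := tendsto_subseq_of_bounded hfst (x := fun n => (ps n).1)
    fun n => ⟨ps n, ⟨hpsS n, n, (hps n).symm⟩, rfl⟩
  have hlim : Tendsto (ps ∘ φ) atTop (𝓝 (x, y)) :=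
    hx.prodMk_nhds (by simpa only [Function.comp_def, hps] using hys.comp hφ.tendsto_atTop)
  exact ⟨(x, y), hS.mem_of_tendsto hlim (Eventually.of_forall fun n => hpsS (φ n)), rfl⟩

section

variable {E : Type*} [NormedAddCommGroup E] [InnerProductSpace ℝ E] {A : E → ℝ}

def IsSubgradient (A : E → ℝ) (x y : E) : Prop :=
  ∀ z : E, A x + ⟪y, z - x⟫ ≤ A z

def Superlinear (A : E → ℝ) : Prop :=
  ∀ K : ℝ, 0 ≤ K → ∃ C : ℝ, ∀ x : E, K * ‖x‖ - C ≤ A x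

theorem isClosed_setOf_isSubgradient (hA : Continuous A) :
    IsClosed {p : E × E | IsSubgradient A p.1 p.2} := by
  simp only [IsSubgradient, Set.ofPred_forall]
  exact isClosed_iInter fun z => isClosed_le (by fun_prop) (by fun_prop)

theorem Superlinear.exists_isSubgradient [ProperSpace E] (hA : Superlinear A)
    (hcont : Continuous A) (y : E) : ∃ x, IsSubgradient A x y := by
  obtain ⟨C, hC⟩ := hA (‖y‖ + 1) (by positivity)
  have htend : Tendsto (fun z => A z - ⟪y, z⟫) (cocompact E) atTop := by
    refine tendsto_atTop_mono (fun z => ?_)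
      (tendsto_atTop_add_const_right _ (-C) tendsto_norm_cocompact_atTop)
    nlinarith [hC z, real_inner_le_norm y z]
  obtain ⟨x, hx⟩ := (by fun_prop : Continuous fun z => A z - ⟪y, z⟫).exists_forall_le htend
  refine ⟨x, fun z => ?_⟩
  rw [inner_sub_right]
  linarith [hx z]

theorem Superlinear.isBounded_setOf_isSubgradient (hA : Superlinear A) {K : Set E}
    (hK : Bornology.IsBounded K) :
    Bornology.IsBounded {x | ∃ y ∈ K, IsSubgradient A x y} := by
  obtain ⟨r, hr, hKr⟩ := hK.exists_pos_norm_le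
  obtain ⟨C, hC⟩ := hA (r + 1) (by positivity)
  refine isBounded_iff_forall_norm_le.2 ⟨A 0 + C, ?_⟩
  rintro x ⟨y, hyK, hx⟩
  have h0 := hx 0
  rw [zero_sub, inner_neg_right] at h0
  nlinarith [hC x, real_inner_le_norm y x, mul_le_mul_of_nonneg_right (hKr y hyK) (norm_nonneg x)]

end

/-- If every vector `y` obtained as a subgradient of a convex
superlinear function `A` at a point of an open set `U` is a subgradient at exactly
one point of `E`, then the set `V` of such vectors is open. -/
theorem legendre_image_open_of_unique_subgradient
    {E : Type*} [NormedAddCommGroup E] [InnerProductSpace ℝ E] [FiniteDimensional ℝ E]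
    (A : E → ℝ)
    (hA_conv : ConvexOn ℝ Set.univ A)
    (hA_sl : ∀ K : ℝ, 0 ≤ K → ∃ C : ℝ, ∀ x : E, K * ‖x‖ - C ≤ A x)
    (U : Set E) (hU : IsOpen U)
    (V : Set E)
    (hV : V = {y : E | ∃ x ∈ U, ∀ z : E, A x + ⟪y, z - x⟫ ≤ A z})
    (huniq : ∀ y ∈ V, ∃ x : E, {z : E | ∀ w : E, A z + ⟪y, w - z⟫ ≤ A w} = {x}) :
    IsOpen V := by
  have hcont : Continuous A := continuousOn_univ.1 (hA_conv.continuousOn isOpen_univ)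
  set S := {p : E × E | p.1 ∉ U ∧ IsSubgradient A p.1 p.2}
  have hS : IsClosed S :=
    (hU.isClosed_compl.preimage continuous_fst).inter (isClosed_setOf_isSubgradient hcont)
  have hV_eq : V = (Prod.snd '' S)ᶜ := by
    ext y
    constructor
    · rintro hy ⟨⟨x, y⟩, ⟨hxU, hx⟩, rfl⟩
      obtain ⟨x₀, hx₀U, hx₀⟩ := hV ▸ hy
      obtain ⟨x₁, hx₁⟩ := huniq _ hy
      rw [Set.eq_singleton_iff_unique_mem] at hx₁
      exact hxU ((hx₁.2 x hx).trans (hx₁.2 x₀ hx₀).symm ▸ hx₀U)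
    · intro hy
      obtain ⟨x, hx⟩ := Superlinear.exists_isSubgradient hA_sl hcont y
      exact hV ▸ ⟨x, by_contra fun hxU => hy ⟨(x, y), ⟨hxU, hx⟩, rfl⟩, hx⟩
  rw [hV_eq, isOpen_compl_iff]
  refine hS.isClosed_image_snd_of_isBounded fun K hK =>
    (Superlinear.isBounded_setOf_isSubgradient hA_sl hK).subset ?_
  rintro _ ⟨⟨x, y⟩, ⟨⟨-, hx⟩, hy⟩, rfl⟩
  exact ⟨y, hy, hx⟩
end
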